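/- Suppose A, B ∈ GL₄(ℂ) satisfy B = HAΛ with H = diag(1,1,1,-1), Λ = diag(ρ,ρ²,ρ²,ρ²), ρ = e^{2πi/3}, the columns of A are x,b,c,d, and AᵀHx = (Δ,0,0,0)ᵀ with Δ = xᵀHx ≠ 0. If integer vectors n, m ∈ ℤ⁴ and ν ∈ ℂ, ν ≠ 0, satisfy nᵀA + mᵀB = ν(1,0,0,0), then x = ξ(Hn + ρ²m) where ξ = ν / (n·Hn - m·n + m·Hm). -/

import Mathlib

open Matrix Complex

noncomputable def Hm : Matrix (Fin 4) (Fin 4) ℂ := Matrix.diagonal ![1, 1, 1, -1]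

noncomputable def ρ : ℂ := Complex.exp (2 * Real.pi * Complex.I / 3)

noncomputable def Λm : Matrix (Fin 4) (Fin 4) ℂ := Matrix.diagonal ![ρ, ρ ^ 2, ρ ^ 2, ρ ^ 2]

/-!
Put `M = Hm * A`. The hypothesis on `A⁻¹` says that the row vector `xᵀ M` is `Δ e₀`. Since
`Hm² = 1` and `Λm` acts as `ρ²` away from the first coordinate, the relation `nᵀ A + mᵀ B = ν e₀`
becomes `(Hm n + ρ² m)ᵀ M = s e₀` for a scalar `s`. As `M` is invertible, `Hm n + ρ² m = (s / Δ) x`.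
Substituting this into the quadratic form and using `1 + ρ + ρ² = 0` shows that the denominator
equals `(s / Δ) ν`.
-/

namespace Matrix

variable {ι K : Type*} [Fintype ι] [DecidableEq ι] [Field K]

theorem inv_row_vecMul {A : Matrix ι ι K} (hA : IsUnit A.det) (i : ι) :
    A⁻¹ i ᵥ* A = Pi.single i 1 := by
  funext j
  exact (congrFun (congrFun (nonsing_inv_mul A hA) i) j).trans one_eq_pi_single

theorem eq_smul_of_vecMul_eq_single {M : Matrix ι ι K} (hM : IsUnit M.det)
    {x y : ι → K} {i : ι} {a b : K} (ha : a ≠ 0) (hx : x ᵥ* M = Pi.single i a)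
    (hy : y ᵥ* M = Pi.single i b) : y = (b / a) • x := by
  apply vecMul_injective_of_isUnit ((isUnit_iff_isUnit_det M).mpr hM)
  change y ᵥ* M = ((b / a) • x) ᵥ* M
  rw [smul_vecMul, hx, hy, ← Pi.single_smul', smul_eq_mul, div_mul_cancel₀ b ha]

theorem dotProduct_mulVec_sub_add_eq_mul {H : Matrix ι ι K} (hH : H * H = 1) {ω : K}
    (hω : 1 + ω + ω ^ 2 = 0) {n m x : ι → K} {c ν : K} (hy : H *ᵥ n + ω ^ 2 • m = c • x)
    (hν : n ⬝ᵥ x + ω * (m ⬝ᵥ H *ᵥ x) = ν) :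
    n ⬝ᵥ H *ᵥ n - m ⬝ᵥ n + m ⬝ᵥ H *ᵥ m = c * ν := by
  have hHn : H *ᵥ n = c • x - ω ^ 2 • m := eq_sub_of_add_eq hy
  have hn : n = c • H *ᵥ x - ω ^ 2 • H *ᵥ m := by
    rw [← mulVec_smul, ← mulVec_smul, ← mulVec_sub, ← hHn, mulVec_mulVec, hH, one_mulVec]
  have hnHn : n ⬝ᵥ H *ᵥ n = c * (n ⬝ᵥ x) - ω ^ 2 * (m ⬝ᵥ n) := by
    rw [hHn, dotProduct_sub, dotProduct_smul, dotProduct_smul, smul_eq_mul, smul_eq_mul,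
      dotProduct_comm n m]
  have hmn : m ⬝ᵥ n = c * (m ⬝ᵥ H *ᵥ x) - ω ^ 2 * (m ⬝ᵥ H *ᵥ m) := by
    conv_lhs => rw [hn]
    rw [dotProduct_sub, dotProduct_smul, dotProduct_smul, smul_eq_mul, smul_eq_mul]
  linear_combination hnHn + ω * hmn + c * hν - (m ⬝ᵥ n) * hω
    - (ω - 1) * (m ⬝ᵥ H *ᵥ m) * hω

end Matrix

theorem one_add_ρ_add_ρ_sq : 1 + ρ + ρ ^ 2 = 0 := by
  have hρ : IsPrimitiveRoot ρ 3 := by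
    simpa [ρ] using Complex.isPrimitiveRoot_exp 3 (by norm_num)
  simpa [Finset.sum_range_succ] using hρ.geom_sum_eq_zero (by norm_num)

theorem Hm_mul_Hm : Hm * Hm = 1 := by
  rw [Hm, diagonal_mul_diagonal, ← diagonal_one]
  congr 1
  ext i
  fin_cases i <;> simp

theorem Hm_mulVec (v : Fin 4 → ℂ) : Hm *ᵥ v = v ᵥ* Hm := by
  rw [← vecMul_transpose, Hm, diagonal_transpose]

theorem isUnit_det_Hm : IsUnit Hm.det :=
  isUnit_det_of_right_inverse Hm_mul_Hm

theorem vecMul_Λm (r : Fin 4 → ℂ) :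
    r ᵥ* Λm = ρ ^ 2 • r + Pi.single 0 ((ρ - ρ ^ 2) * r 0) := by
  funext j
  fin_cases j <;> simp [Λm, vecMul_diagonal] <;> ring

theorem vecMul_Hm_mul_eq_single {A : Matrix (Fin 4) (Fin 4) ℂ} {n m : Fin 4 → ℂ} {ν : ℂ}
    (h : n ᵥ* A + m ᵥ* (Hm * A * Λm) = Pi.single 0 ν) :
    (Hm *ᵥ n + ρ ^ 2 • m) ᵥ* (Hm * A) =
      Pi.single 0 (ν + (ρ ^ 2 - ρ) * (m ᵥ* (Hm * A)) 0) := by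
  have hn : n ᵥ* A = Pi.single 0 ν - (m ᵥ* (Hm * A)) ᵥ* Λm :=
    eq_sub_of_add_eq (by rwa [vecMul_vecMul])
  have hHn : (Hm *ᵥ n) ᵥ* (Hm * A) = n ᵥ* A := by
    rw [Hm_mulVec, vecMul_vecMul, ← Matrix.mul_assoc, Hm_mul_Hm, Matrix.one_mul]
  rw [add_vecMul, smul_vecMul, hHn, hn, vecMul_Λm,
    show ν + (ρ ^ 2 - ρ) * (m ᵥ* (Hm * A)) 0 = ν - (ρ - ρ ^ 2) * (m ᵥ* (Hm * A)) 0 by ring,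
    Pi.single_sub]
  abel

theorem stmt2_general (A B : Matrix (Fin 4) (Fin 4) ℂ)
    (hA : IsUnit A.det)
    (hBA : B = Hm * A * Λm)
    (x : Fin 4 → ℂ) (hx : ∀ i, A i 0 = x i)
    (Δ : ℂ) (hΔ0 : Δ ≠ 0)
    (hinv : ∀ μ, Hm.mulVec x μ = A⁻¹ 0 μ * Δ)
    (ν : ℂ)
    (nC mC : Fin 4 → ℂ)
    (hES : ∀ j, (Matrix.vecMul nC A + Matrix.vecMul mC B) j
        = ν * (if j = 0 then 1 else 0))
    (hden : nC ⬝ᵥ Hm.mulVec nC - mC ⬝ᵥ nC + mC ⬝ᵥ Hm.mulVec mC ≠ 0) :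
    x = (ν / (nC ⬝ᵥ Hm.mulVec nC - mC ⬝ᵥ nC + mC ⬝ᵥ Hm.mulVec mC)) •
        (Hm.mulVec nC + ρ ^ 2 • mC) := by
  have hES' : nC ᵥ* A + mC ᵥ* (Hm * A * Λm) = Pi.single 0 ν := by
    funext j
    rw [← hBA, hES j, Pi.single_apply]
    split_ifs <;> simp
  have hxrow : x ᵥ* (Hm * A) = Pi.single 0 Δ := by
    have hHx : Hm *ᵥ x = Δ • A⁻¹ 0 := funext fun μ => (hinv μ).trans (mul_comm _ _)
    rw [← vecMul_vecMul, ← Hm_mulVec, hHx, smul_vecMul,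
      inv_row_vecMul hA, ← Pi.single_smul', smul_eq_mul, mul_one]
  have hy := eq_smul_of_vecMul_eq_single (by rw [det_mul]; exact isUnit_det_Hm.mul hA) hΔ0
    hxrow (vecMul_Hm_mul_eq_single hES')
  have hcol : ∀ v, (v ᵥ* A) 0 = v ⬝ᵥ x := fun v => congrArg (v ⬝ᵥ ·) (funext hx)
  have hν : nC ⬝ᵥ x + ρ * (mC ⬝ᵥ Hm *ᵥ x) = ν := by
    have hΛ : (mC ᵥ* (Hm * A * Λm)) 0 = ρ * (mC ⬝ᵥ Hm *ᵥ x) := by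
      rw [← vecMul_vecMul, ← vecMul_vecMul, Λm, vecMul_diagonal, hcol, dotProduct_mulVec]
      simp [mul_comm]
    simpa [hcol, hΛ] using congrFun hES' 0
  rw [dotProduct_mulVec_sub_add_eq_mul Hm_mul_Hm one_add_ρ_add_ρ_sq hy hν] at hden ⊢
  rw [hy, smul_smul, div_mul_eq_mul_div, mul_comm ν, div_self hden, one_smul]

theorem stmt2 (A B : Matrix (Fin 4) (Fin 4) ℂ)
    (hA : IsUnit A.det) (hB : IsUnit B.det)
    (hBA : B = Hm * A * Λm)
    (x : Fin 4 → ℂ) (hx : ∀ i, A i 0 = x i)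
    (Δ : ℂ) (hΔ : Δ = x ⬝ᵥ Hm.mulVec x) (hΔ0 : Δ ≠ 0)
    (hinv : ∀ μ, Hm.mulVec x μ = A⁻¹ 0 μ * Δ)
    (n m : Fin 4 → ℤ) (ν : ℂ) (hν : ν ≠ 0)
    (nC mC : Fin 4 → ℂ) (hnC : ∀ i, nC i = (n i : ℂ)) (hmC : ∀ i, mC i = (m i : ℂ))
    (hES : ∀ j, (Matrix.vecMul nC A + Matrix.vecMul mC B) j
        = ν * (if j = 0 then 1 else 0))
    (hden : nC ⬝ᵥ Hm.mulVec nC - mC ⬝ᵥ nC + mC ⬝ᵥ Hm.mulVec mC ≠ 0) :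
    x = (ν / (nC ⬝ᵥ Hm.mulVec nC - mC ⬝ᵥ nC + mC ⬝ᵥ Hm.mulVec mC)) •
        (Hm.mulVec nC + ρ ^ 2 • mC) :=
  stmt2_general A B hA hBA x hx Δ hΔ0 hinv ν nC mC hES hden
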